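/- For every real c > 0, the improper integral ∫₀¹ ( 4r/(1 − r²)² − 4c²·r^{2c−1}/(1 − r^{2c})² ) dr converges and equals c − 1; that is, lim_{s → 1⁻} ∫₀^s ( 4r/(1 − r²)² − 4c²·r^{2c−1}/(1 − r^{2c})² ) dr = c − 1. -/

import Mathlib

open Real Set Filter Topology MeasureTheory intervalIntegral

/-!
For `r ∈ (0, 1)` the integrand is `f₂' - f_{2c}'`, where `fₚ r = p / (1 - r ^ p)` has derivative
`p² r^(p-1) / (1 - r^p)² ≥ 0`; nonnegativity makes each piece integrable near `0` even when
`2c - 1 < 0`, so `∫₀ˢ = (f₂ - f_{2c})(s) - (f₂ - f_{2c})(0)` with `fₚ 0 = p`. As `s → 1⁻` both terms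
blow up like `1 / (1 - s)`, and the poles cancel: by L'Hôpital `1/(1-t) - p/(1-t^p) → (1-p)/2`,
whence `(f₂ - f_{2c})(s) → 1 - c` and the integral tends to `(1 - c) - (2 - 2c) = c - 1`.
-/

section OneSubRpow

variable {p : ℝ}

lemma hasDerivAt_div_one_sub_rpow {x : ℝ} (hx : x ≠ 0) (hx1 : x ^ p ≠ 1) :
    HasDerivAt (fun y => p / (1 - y ^ p)) (p ^ 2 * x ^ (p - 1) / (1 - x ^ p) ^ 2) x :=
  ((hasDerivAt_const x p).div ((hasDerivAt_rpow_const (Or.inl hx)).const_sub 1)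
    (sub_ne_zero.2 hx1.symm)).congr_deriv (by ring)

lemma continuousOn_div_one_sub_rpow (hp : 0 < p) {s : ℝ} (hs : s < 1) :
    ContinuousOn (fun y => p / (1 - y ^ p)) (Icc 0 s) :=
  continuousOn_const.div (continuousOn_const.sub (continuous_rpow_const hp.le).continuousOn)
    fun _ hy => (sub_pos.2 (rpow_lt_one hy.1 (hy.2.trans_lt hs) hp)).ne'

lemma intervalIntegrable_deriv_div_one_sub_rpow (hp : 0 < p) {s : ℝ} (hs0 : 0 ≤ s)
    (hs1 : s < 1) :
    IntervalIntegrable (fun r => p ^ 2 * r ^ (p - 1) / (1 - r ^ p) ^ 2) volume 0 s := by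
  refine intervalIntegrable_deriv_of_nonneg (g := fun y => p / (1 - y ^ p)) ?_ ?_ ?_
  · simpa only [uIcc_of_le hs0] using continuousOn_div_one_sub_rpow hp hs1
  · intro x hx
    rw [min_eq_left hs0, max_eq_right hs0] at hx
    exact hasDerivAt_div_one_sub_rpow hx.1.ne' (rpow_lt_one hx.1.le (hx.2.trans hs1) hp).ne
  · intro x hx
    rw [min_eq_left hs0] at hx
    have := hx.1
    positivity

lemma integral_deriv_div_one_sub_rpow (hp : 0 < p) {s : ℝ} (hs0 : 0 ≤ s) (hs1 : s < 1) :
    ∫ r in (0 : ℝ)..s, p ^ 2 * r ^ (p - 1) / (1 - r ^ p) ^ 2 = p / (1 - s ^ p) - p := by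
  rw [integral_eq_sub_of_hasDerivAt_of_le hs0
    (continuousOn_div_one_sub_rpow hp hs1)
    (fun x hx => hasDerivAt_div_one_sub_rpow hx.1.ne'
      (rpow_lt_one hx.1.le (hx.2.trans hs1) hp).ne)
    (intervalIntegrable_deriv_div_one_sub_rpow hp hs0 hs1), zero_rpow hp.ne', sub_zero, div_one]

lemma tendsto_rpow_sub_one_div_sub_one (q : ℝ) :
    Tendsto (fun t : ℝ => (t ^ q - 1) / (t - 1)) (𝓝[<] 1) (𝓝 q) := by
  have h := (hasDerivAt_rpow_const (p := q) (Or.inl one_ne_zero)).tendsto_slope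
  rw [one_rpow, mul_one] at h
  exact (h.mono_left (nhdsWithin_mono _ fun t ht => ne_of_lt ht)).congr fun t => by
    rw [slope_def_field, one_rpow]

lemma tendsto_lhopital_quotient_one_sub_rpow (hp : p ≠ 0) :
    Tendsto (fun t : ℝ => (p - p * t ^ (p - 1)) / (-(1 - t ^ p) - (1 - t) * (p * t ^ (p - 1))))
      (𝓝[<] 1) (𝓝 ((1 - p) / 2)) := by
  have hpow : Tendsto (fun t : ℝ => t ^ (p - 1)) (𝓝[<] 1) (𝓝 1) := by
    simpa using (continuousAt_rpow_const 1 (p - 1) (Or.inl one_ne_zero)).tendsto.mono_left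
      nhdsWithin_le_nhds
  -- dividing numerator and denominator by `t - 1` turns both into difference quotients at `1`
  have h := ((tendsto_rpow_sub_one_div_sub_one (p - 1)).const_mul (-p)).div
    ((tendsto_rpow_sub_one_div_sub_one p).add (hpow.const_mul p))
    (by rw [mul_one, ← two_mul]; exact mul_ne_zero two_ne_zero hp)
  rw [show -p * (p - 1) / (p + p * 1) = (1 - p) / 2 by field_simp; ring] at h
  refine h.congr' ?_
  filter_upwards [Ioo_mem_nhdsLT one_pos] with t ht
  have : t - 1 ≠ 0 := (sub_neg.2 ht.2).ne
  simp only [Pi.div_apply]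
  field_simp
  ring

lemma tendsto_one_div_one_sub_sub_div_one_sub_rpow (hp : 0 < p) :
    Tendsto (fun t : ℝ => 1 / (1 - t) - p / (1 - t ^ p)) (𝓝[<] 1) (𝓝 ((1 - p) / 2)) := by
  have hmem : Ioo 0 1 ∈ 𝓝[<] (1 : ℝ) := Ioo_mem_nhdsLT one_pos
  have hlim : Tendsto (fun t : ℝ => (1 - t ^ p - p * (1 - t)) / ((1 - t) * (1 - t ^ p)))
      (𝓝[<] 1) (𝓝 ((1 - p) / 2)) := by
    refine HasDerivAt.lhopital_zero_nhdsLT (f' := fun t => p - p * t ^ (p - 1))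
      (g' := fun t => -(1 - t ^ p) - (1 - t) * (p * t ^ (p - 1))) ?_ ?_ ?_ ?_ ?_ ?_
    · filter_upwards [hmem] with t ht
      exact (((hasDerivAt_rpow_const (Or.inl ht.1.ne')).const_sub 1).sub
        (((hasDerivAt_id' t).const_sub 1).const_mul p)).congr_deriv (by ring)
    · filter_upwards [hmem] with t ht
      exact (((hasDerivAt_id' t).const_sub 1).mul
        ((hasDerivAt_rpow_const (Or.inl ht.1.ne')).const_sub 1)).congr_deriv (by ring)
    · filter_upwards [hmem] with t ht
      have h1 : 0 < 1 - t ^ p := sub_pos.2 (rpow_lt_one ht.1.le ht.2 hp)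
      have h2 : 0 < (1 - t) * (p * t ^ (p - 1)) := by
        have := sub_pos.2 ht.2; have := ht.1; positivity
      linarith
    · have : Continuous fun t : ℝ => 1 - t ^ p - p * (1 - t) := by fun_prop (disch := positivity)
      exact (this.tendsto' 1 0 (by simp)).mono_left nhdsWithin_le_nhds
    · have : Continuous fun t : ℝ => (1 - t) * (1 - t ^ p) := by fun_prop (disch := positivity)
      exact (this.tendsto' 1 0 (by simp)).mono_left nhdsWithin_le_nhds
    · exact tendsto_lhopital_quotient_one_sub_rpow hp.ne'
  refine hlim.congr' ?_
  filter_upwards [hmem] with t ht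
  have h1 : 1 - t ≠ 0 := (sub_pos.2 ht.2).ne'
  have h2 : 1 - t ^ p ≠ 0 := (sub_pos.2 (rpow_lt_one ht.1.le ht.2 hp)).ne'
  field_simp
end OneSubRpow

theorem chern_integral_family (c : ℝ) (hc : 0 < c) :
    Filter.Tendsto
      (fun s : ℝ => ∫ r in (0:ℝ)..s,
        (4 * r / (1 - r^2)^2 - 4 * c^2 * r ^ (2*c - 1) / (1 - r ^ (2*c))^2))
      (nhdsWithin 1 (Set.Iio 1)) (nhds (c - 1)) := by
  have h2c : 0 < 2 * c := by positivity
  have hintegrand : (fun r : ℝ =>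
      4 * r / (1 - r^2)^2 - 4 * c^2 * r ^ (2*c - 1) / (1 - r ^ (2*c))^2) =
      fun r => (2:ℝ) ^ 2 * r ^ ((2:ℝ) - 1) / (1 - r ^ (2:ℝ)) ^ 2
        - (2 * c) ^ 2 * r ^ (2 * c - 1) / (1 - r ^ (2 * c)) ^ 2 := by
    funext r
    norm_num [rpow_two]
    ring
  have hlim := ((tendsto_one_div_one_sub_sub_div_one_sub_rpow h2c).sub
    (tendsto_one_div_one_sub_sub_div_one_sub_rpow two_pos)).add_const (2 * c - 2)
  rw [show (1 - 2 * c) / 2 - (1 - 2) / 2 + (2 * c - 2) = c - 1 by ring] at hlim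
  refine hlim.congr' ?_
  filter_upwards [Ioo_mem_nhdsLT one_pos] with s hs
  rw [hintegrand, integral_sub
    (intervalIntegrable_deriv_div_one_sub_rpow two_pos hs.1.le hs.2)
    (intervalIntegrable_deriv_div_one_sub_rpow h2c hs.1.le hs.2),
    integral_deriv_div_one_sub_rpow two_pos hs.1.le hs.2,
    integral_deriv_div_one_sub_rpow h2c hs.1.le hs.2]
  ring
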